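/- Let N ≥ 1, 1 ≤ n ≤ N, and let z, w ∈ ℂ with z ≠ 0 and z^N ≠ w^N. Then (1/N) · ∑_{α ∈ A_N} α^n / (α w − z)^2 = z^{n−2} w^{N−n} · ( N z^N / (z^N − w^N)^2 − (n−1)/(z^N − w^N) ). -/

import Mathlib

/-!
Write `w = t z`. For `α ^ N = 1` we have `(α t - 1) ∑_{i<N} (α t)^i = t^N - 1`, so each term of the
sum is `z⁻² α^n (∑_{i<N} (α t)^i)^2 / (t^N - 1)^2`. Summing over the roots of unity kills every
monomial `α^(n+i+j) t^(i+j)` with `N ∤ n + i + j`; for `1 ≤ n ≤ N` the surviving pairs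
`(i, j) ∈ [0, N)²` are the `N - n + 1` with `i + j = N - n` and the `n - 1` with `i + j = 2N - n`.
-/

open Finset

theorem IsPrimitiveRoot.sum_nthRoots_one_pow {R : Type*} [CommRing R] [IsDomain R] [DecidableEq R]
    {N : ℕ} {ζ : R} (hζ : IsPrimitiveRoot ζ N) (m : ℕ) :
    ∑ α ∈ (Polynomial.nthRoots N (1 : R)).toFinset, α ^ m = if N ∣ m then (N : R) else 0 := by
  have hroots : (Polynomial.nthRoots N (1 : R)).toFinset = (range N).image (ζ ^ ·) := by
    ext; simp [hζ.nthRoots_eq (one_pow N), eq_comm]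
  rw [hroots, sum_image fun i hi j hj h ↦ hζ.pow_inj (mem_range.mp hi) (mem_range.mp hj) h]
  simp_rw [← pow_mul, mul_comm _ m, pow_mul]
  split_ifs with hdvd
  · simp [(hζ.pow_eq_one_iff_dvd m).mpr hdvd]
  · have hne : ζ ^ m - 1 ≠ 0 := sub_ne_zero.mpr fun h ↦ hdvd ((hζ.pow_eq_one_iff_dvd m).mp h)
    refine (mul_eq_zero.mp ?_).resolve_right hne
    rw [geom_sum_mul, ← pow_mul, mul_comm, pow_mul, hζ.pow_eq_one, one_pow, sub_self]

theorem Nat.dvd_add_iff_eq_of_lt {N m j j₀ : ℕ} (hj : j < N) (hj₀ : j₀ < N) (h₀ : N ∣ m + j₀) :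
    N ∣ m + j ↔ j = j₀ := by
  refine ⟨fun h ↦ ?_, fun h ↦ h ▸ h₀⟩
  have hmod : m + j ≡ m + j₀ [MOD N] :=
    (Nat.modEq_zero_iff_dvd.mpr h).trans (Nat.modEq_zero_iff_dvd.mpr h₀).symm
  exact (Nat.ModEq.add_left_cancel' m hmod).eq_of_lt_of_lt hj hj₀

theorem sum_range_ite_dvd_add {M : Type*} [AddCommMonoid M] {N m j₀ : ℕ} (hj₀ : j₀ < N)
    (h₀ : N ∣ m + j₀) (g : ℕ → M) :
    ∑ j ∈ range N, (if N ∣ m + j then g j else 0) = g j₀ := by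
  refine (sum_eq_single_of_mem j₀ (mem_range.mpr hj₀) fun j hj hne ↦ ?_).trans (if_pos h₀)
  exact if_neg (mt (Nat.dvd_add_iff_eq_of_lt (mem_range.mp hj) hj₀ h₀).mp hne)

theorem sum_range_sum_range_ite_dvd {M : Type*} [AddCommMonoid M] {N n : ℕ}
    (hn1 : 1 ≤ n) (hnN : n ≤ N) (f : ℕ → M) :
    ∑ i ∈ range N, ∑ j ∈ range N, (if N ∣ n + i + j then f (i + j) else 0)
      = (N - n + 1) • f (N - n) + (n - 1) • f (2 * N - n) := by
  have hinner : ∀ i ∈ range N, ∑ j ∈ range N, (if N ∣ n + i + j then f (i + j) else 0)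
      = if i ≤ N - n then f (N - n) else f (2 * N - n) := by
    intro i hi
    rw [mem_range] at hi
    split_ifs with h
    · rw [sum_range_ite_dvd_add (j₀ := N - n - i) (by omega) ⟨1, by omega⟩]
      congr 1; omega
    · rw [sum_range_ite_dvd_add (j₀ := 2 * N - n - i) (by omega) ⟨2, by omega⟩]
      congr 1; omega
  rw [sum_congr rfl hinner, range_eq_Ico,
    ← sum_Ico_consecutive _ (Nat.zero_le (N - n + 1)) (by omega : N - n + 1 ≤ N),
    sum_congr rfl fun i hi ↦ if_pos (by rw [mem_Ico] at hi; omega),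
    sum_congr rfl fun i hi ↦ if_neg (by rw [mem_Ico] at hi; omega)]
  simp only [sum_const, Nat.card_Ico]
  congr 2; omega

theorem mul_pow_mul_geom_sum_sq {R : Type*} [CommSemiring R] (α t : R) (n N : ℕ) :
    α ^ n * (∑ i ∈ range N, (α * t) ^ i) ^ 2
      = ∑ i ∈ range N, ∑ j ∈ range N, α ^ (n + i + j) * t ^ (i + j) := by
  rw [sq, sum_mul_sum, mul_sum]
  refine sum_congr rfl fun i _ ↦ ?_
  rw [mul_sum]
  refine sum_congr rfl fun j _ ↦ ?_
  ring

theorem IsPrimitiveRoot.sum_nthRoots_one_pow_div_mul_sub_one_sq {K : Type*} [Field K]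
    [DecidableEq K] {N n : ℕ} {ζ : K} (hζ : IsPrimitiveRoot ζ N) (hn1 : 1 ≤ n) (hnN : n ≤ N)
    {t : K} (ht : t ^ N ≠ 1) :
    ∑ α ∈ (Polynomial.nthRoots N (1 : K)).toFinset, α ^ n / (α * t - 1) ^ 2
      = N * ((N - n + 1) • t ^ (N - n) + (n - 1) • t ^ (2 * N - n)) / (t ^ N - 1) ^ 2 := by
  set R := (Polynomial.nthRoots N (1 : K)).toFinset
  have hterm : ∀ α ∈ R, α ^ n / (α * t - 1) ^ 2
      = (∑ i ∈ range N, ∑ j ∈ range N, α ^ (n + i + j) * t ^ (i + j)) / (t ^ N - 1) ^ 2 := by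
    intro α hα
    have hαN : α ^ N = 1 :=
      (Polynomial.mem_nthRoots (by omega)).mp (Multiset.mem_toFinset.mp hα)
    have hgeom : (α * t - 1) * ∑ i ∈ range N, (α * t) ^ i = t ^ N - 1 := by
      rw [mul_geom_sum, mul_pow, hαN, one_mul]
    have hne : α * t - 1 ≠ 0 := left_ne_zero_of_mul (hgeom ▸ sub_ne_zero.mpr ht)
    have hgeom_ne : ∑ i ∈ range N, (α * t) ^ i ≠ 0 :=
      right_ne_zero_of_mul (hgeom ▸ sub_ne_zero.mpr ht)
    rw [← mul_pow_mul_geom_sum_sq, ← hgeom]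
    field_simp
  have hnum : ∑ α ∈ R, ∑ i ∈ range N, ∑ j ∈ range N, α ^ (n + i + j) * t ^ (i + j)
      = ∑ i ∈ range N, ∑ j ∈ range N, if N ∣ n + i + j then (N : K) * t ^ (i + j) else 0 := by
    rw [sum_comm]
    refine sum_congr rfl fun i _ ↦ ?_
    rw [sum_comm]
    refine sum_congr rfl fun j _ ↦ ?_
    rw [← sum_mul, hζ.sum_nthRoots_one_pow, ite_mul, zero_mul]
  rw [sum_congr rfl hterm, ← sum_div, hnum,
    sum_range_sum_range_ite_dvd hn1 hnN fun s ↦ (N : K) * t ^ s, mul_add,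
    mul_smul_comm, mul_smul_comm]

theorem rootsOfUnity_kernel_sum_general
    (N n : ℕ) (hn1 : 1 ≤ n) (hnN : n ≤ N)
    (z w : ℂ) (hz : z ≠ 0) (hzw : z ^ N ≠ w ^ N) :
    (1 / (N : ℂ)) *
        ∑ α ∈ (Polynomial.nthRoots N (1 : ℂ)).toFinset, α ^ n / (α * w - z) ^ 2
      = z ^ ((n : ℤ) - 2) * w ^ (N - n) *
          ((N : ℂ) * z ^ N / (z ^ N - w ^ N) ^ 2
            - ((n : ℂ) - 1) / (z ^ N - w ^ N)) := by
  obtain ⟨t, rfl⟩ : ∃ t, w = t * z := ⟨w / z, (div_mul_cancel₀ w hz).symm⟩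
  have ht : t ^ N ≠ 1 := fun h ↦ hzw (by rw [mul_pow, h, one_mul])
  have hscale : ∀ α : ℂ, α ^ n / (α * (t * z) - z) ^ 2 = α ^ n / (α * t - 1) ^ 2 / z ^ 2 := by
    intro α
    rw [show α * (t * z) - z = (α * t - 1) * z by ring, mul_pow, div_mul_eq_div_div]
  rw [sum_congr rfl fun α _ ↦ hscale α, ← sum_div,
    (Complex.isPrimitiveRoot_exp N (by omega)).sum_nthRoots_one_pow_div_mul_sub_one_sq hn1 hnN ht,
    mul_pow t z, mul_pow t z, show z ^ N - t ^ N * z ^ N = -(z ^ N * (t ^ N - 1)) by ring]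
  have hD : t ^ N - 1 ≠ 0 := sub_ne_zero.mpr ht
  obtain ⟨k, rfl⟩ := Nat.exists_eq_add_of_le hnN
  obtain ⟨m, rfl⟩ := Nat.exists_eq_add_of_le' hn1
  rw [zpow_sub₀ hz, zpow_natCast, zpow_ofNat,
    show 2 * (m + 1 + k) - (m + 1) = k + (m + 1 + k) by omega]
  simp only [Nat.add_sub_cancel_left, nsmul_eq_mul]
  push_cast
  have hN : (m + 1 + k : ℂ) ≠ 0 := by norm_cast; omega
  field_simp
  ring

/-- `(1/N) ∑_{α^N = 1} α^n / (α w - z)^2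
      = z^{n-2} w^{N-n} (N z^N/(z^N-w^N)^2 - (n-1)/(z^N-w^N))`. -/
theorem rootsOfUnity_kernel_sum
    (N n : ℕ) (hN : 1 ≤ N) (hn1 : 1 ≤ n) (hnN : n ≤ N)
    (z w : ℂ) (hz : z ≠ 0) (hzw : z ^ N ≠ w ^ N) :
    (1 / (N : ℂ)) *
        ∑ α ∈ (Polynomial.nthRoots N (1 : ℂ)).toFinset, α ^ n / (α * w - z) ^ 2
      = z ^ ((n : ℤ) - 2) * w ^ (N - n) *
          ((N : ℂ) * z ^ N / (z ^ N - w ^ N) ^ 2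
            - ((n : ℂ) - 1) / (z ^ N - w ^ N)) :=
  rootsOfUnity_kernel_sum_general N n hn1 hnN z w hz hzw
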